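/- arXiv:1407.3075 — 6 statements merged into one kernel-verified Lean document; each statement's English description precedes it below -/
import Mathlib

section
/- Under the same hypotheses, the symmetric matrix −R = −(1/2)(ΞL + LᵀΞ) is positive semi-definite and its kernel is exactly the span of the all-ones vector 𝟏; in particular zero is a simple eigenvalue of R. -/
/-!
With `M = ΞL + LᵀΞ`, the zero row sums of `L` and `ξᵀL = 0` give
`xᵀ M x = -∑ i j, ξᵢ Lᵢⱼ (xᵢ - xⱼ)²`, a sum of nonnegative terms, so `-R` is positive
semidefinite. For such a matrix `-R x = 0` iff `xᵀ(-R)x = 0`, i.e. iff `x` is constant along every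
edge of the graph of `L`; irreducibility makes `x` constant. Since `R` is symmetric, the
multiplicity of `0` as a root of its characteristic polynomial is the dimension of its kernel.
-/

open Matrix

/-- `L` is a Laplacian-type matrix: nonnegative off-diagonal entries and zero row sums. -/
def IsLaplacian {m : ℕ} (L : Matrix (Fin m) (Fin m) ℝ) : Prop :=
  (∀ i j, i ≠ j → 0 ≤ L i j) ∧ (∀ i, ∑ j, L i j = 0)

/-- `L` is irreducible: the associated digraph is strongly connected. -/
def IsIrreducibleMatrix {m : ℕ} (L : Matrix (Fin m) (Fin m) ℝ) : Prop :=
  ∀ i j : Fin m, i ≠ j → Relation.TransGen (fun a b => a ≠ b ∧ 0 < L a b) i j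

open Module

theorem Matrix.IsHermitian.rootMultiplicity_zero_charpoly {𝕜 : Type*} [RCLike 𝕜] {n : Type*}
    [Fintype n] [DecidableEq n] {A : Matrix n n 𝕜} (hA : A.IsHermitian) :
    A.charpoly.rootMultiplicity 0 = finrank 𝕜 (LinearMap.ker A.mulVecLin) := by
  have hzero : A.charpoly.rootMultiplicity 0 = Fintype.card {i // hA.eigenvalues i = 0} := by
    rw [← Polynomial.count_roots, hA.roots_charpoly_eq_eigenvalues, Multiset.count_map,
      Fintype.card_subtype]
    simp only [Finset.card, Finset.filter_val]
    exact congrArg _ (Multiset.filter_congr fun i _ => by rw [eq_comm]; simp)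
  have hnonzero : finrank 𝕜 (LinearMap.range A.mulVecLin)
      = Fintype.card {i // ¬ hA.eigenvalues i = 0} := hA.rank_eq_card_non_zero_eigs
  rw [Fintype.card_subtype_compl] at hnonzero
  have hrankNullity := LinearMap.finrank_range_add_finrank_ker A.mulVecLin
  rw [finrank_fintype_fun_eq_card] at hrankNullity
  have hle := Fintype.card_subtype_le (fun i => hA.eigenvalues i = 0)
  omega

theorem finrank_ker_mulVecLin_eq_one {ι : Type*} [Fintype ι] [Nonempty ι] {A : Matrix ι ι ℝ}
    (hA : ∀ x, A *ᵥ x = 0 ↔ ∃ c : ℝ, x = fun _ => c) :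
    finrank ℝ (LinearMap.ker A.mulVecLin) = 1 := by
  have hker : LinearMap.ker A.mulVecLin = ℝ ∙ (fun _ => 1) := by
    ext x
    simp only [LinearMap.mem_ker, mulVecLin_apply, hA, Submodule.mem_span_singleton, eq_comm]
    simp [funext_iff]
  rw [hker]
  exact finrank_span_singleton (Function.ne_iff.mpr ⟨Classical.arbitrary ι, one_ne_zero⟩)

theorem dotProduct_diagonal_mul_add_transpose_mul_diagonal_mulVec {ι : Type*} [Fintype ι]
    [DecidableEq ι] {L : Matrix ι ι ℝ} {ξ : ι → ℝ} (hrow : ∀ i, ∑ j, L i j = 0)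
    (hcol : ∀ j, ∑ i, ξ i * L i j = 0) (x : ι → ℝ) :
    x ⬝ᵥ ((diagonal ξ * L + Lᵀ * diagonal ξ) *ᵥ x) = -∑ i, ∑ j, ξ i * L i j * (x i - x j) ^ 2 := by
  have hdiag : ∑ i, ∑ j, ξ i * L i j * x i ^ 2 = 0 := by
    simp [← Finset.sum_mul, ← Finset.mul_sum, hrow]
  have hoff : ∑ i, ∑ j, ξ i * L i j * x j ^ 2 = 0 := by
    rw [Finset.sum_comm]
    simp [← Finset.sum_mul, hcol]
  have hcross : x ⬝ᵥ ((diagonal ξ * L + Lᵀ * diagonal ξ) *ᵥ x)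
      = 2 * ∑ i, ∑ j, ξ i * L i j * x i * x j := by
    have hentry : ∀ i j, (diagonal ξ * L + Lᵀ * diagonal ξ) i j = ξ i * L i j + L j i * ξ j := by
      simp [diagonal_mul, mul_diagonal]
    calc x ⬝ᵥ ((diagonal ξ * L + Lᵀ * diagonal ξ) *ᵥ x)
        = ∑ i, ∑ j, (ξ i * L i j * x i * x j + ξ j * L j i * x i * x j) := by
          simp only [dotProduct, mulVec, hentry, Finset.mul_sum]
          exact Finset.sum_congr rfl fun i _ => Finset.sum_congr rfl fun j _ => by ring
      _ = 2 * ∑ i, ∑ j, ξ i * L i j * x i * x j := by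
          simp only [Finset.sum_add_distrib]
          rw [Finset.sum_comm (f := fun i j => ξ j * L j i * x i * x j)]
          simp only [mul_right_comm _ (x _) (x _), two_mul]
  have hexpand : ∑ i, ∑ j, ξ i * L i j * (x i - x j) ^ 2
      = ∑ i, ∑ j, ξ i * L i j * x i ^ 2 + ∑ i, ∑ j, ξ i * L i j * x j ^ 2
        - 2 * ∑ i, ∑ j, ξ i * L i j * x i * x j := by
    simp only [Finset.mul_sum, ← Finset.sum_add_distrib, ← Finset.sum_sub_distrib]
    exact Finset.sum_congr rfl fun i _ => Finset.sum_congr rfl fun j _ => by ring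
  rw [hcross, hexpand, hdiag, hoff]
  ring

section Laplacian

variable {m : ℕ} {L : Matrix (Fin m) (Fin m) ℝ} {ξ : Fin m → ℝ}

theorem IsLaplacian.mul_mul_sq_sub_nonneg (hL : IsLaplacian L) (hξ : ∀ i, 0 ≤ ξ i)
    (x : Fin m → ℝ) (i j : Fin m) : 0 ≤ ξ i * L i j * (x i - x j) ^ 2 := by
  rcases eq_or_ne i j with rfl | hij
  · simp
  · exact mul_nonneg (mul_nonneg (hξ i) (hL.1 i j hij)) (sq_nonneg _)

theorem IsIrreducibleMatrix.exists_eq_const {x : Fin m → ℝ} (hirr : IsIrreducibleMatrix L)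
    (hx : ∀ i j, i ≠ j → 0 < L i j → x i = x j) : ∃ c : ℝ, x = fun _ => c := by
  rcases isEmpty_or_nonempty (Fin m) with hempty | ⟨⟨i₀⟩⟩
  · exact ⟨0, funext hempty.elim⟩
  have hpath : ∀ {i j}, Relation.TransGen (fun a b => a ≠ b ∧ 0 < L a b) i j → x i = x j := by
    intro i j h
    induction h with
    | single hab => exact hx _ _ hab.1 hab.2
    | tail _ hbc ih => exact ih.trans (hx _ _ hbc.1 hbc.2)
  refine ⟨x i₀, funext fun i => ?_⟩
  rcases eq_or_ne i i₀ with rfl | hne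
  · rfl
  · exact hpath (hirr i i₀ hne)

theorem IsIrreducibleMatrix.sum_mul_mul_sq_sub_eq_zero_iff (hirr : IsIrreducibleMatrix L)
    (hL : IsLaplacian L) (hξ : ∀ i, 0 < ξ i) (x : Fin m → ℝ) :
    ∑ i, ∑ j, ξ i * L i j * (x i - x j) ^ 2 = 0 ↔ ∃ c : ℝ, x = fun _ => c := by
  have hnonneg := hL.mul_mul_sq_sub_nonneg (fun i => (hξ i).le) x
  refine ⟨fun h => hirr.exists_eq_const fun i j _ hLij => ?_, by rintro ⟨c, rfl⟩; simp⟩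
  have hrow := (Fintype.sum_eq_zero_iff_of_nonneg fun i => Finset.sum_nonneg fun j _ =>
    hnonneg i j).1 h
  have hterm := congrFun ((Fintype.sum_eq_zero_iff_of_nonneg (hnonneg i)).1 (congrFun hrow i)) j
  simpa [(mul_pos (hξ i) hLij).ne', sub_eq_zero] using hterm

end Laplacian

theorem negR_posSemidef_kernel_span_one_general {m : ℕ} (hm : 0 < m)
    (L : Matrix (Fin m) (Fin m) ℝ) (ξ : Fin m → ℝ)
    (hL : IsLaplacian L) (hirr : IsIrreducibleMatrix L)
    (hξpos : ∀ i, 0 < ξ i) (hξL : ∀ j, ∑ i, ξ i * L i j = 0)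
    (R : Matrix (Fin m) (Fin m) ℝ)
    (hR : R = (1/2 : ℝ) • (Matrix.diagonal ξ * L + Lᵀ * Matrix.diagonal ξ)) :
    (-R).PosSemidef ∧
    (∀ x : Fin m → ℝ, (-R).mulVec x = 0 ↔ ∃ c : ℝ, x = fun _ => c) ∧
    (Matrix.charpoly R).rootMultiplicity 0 = 1 := by
  have hquad (x : Fin m → ℝ) :
      star x ⬝ᵥ ((-R) *ᵥ x) = (1 / 2) * ∑ i, ∑ j, ξ i * L i j * (x i - x j) ^ 2 := by
    rw [hR, star_trivial, neg_mulVec, smul_mulVec, dotProduct_neg, dotProduct_smul,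
      dotProduct_diagonal_mul_add_transpose_mul_diagonal_mulVec hL.2 hξL, smul_eq_mul]
    ring
  have hRherm : R.IsHermitian := by
    rw [hR, IsHermitian, conjTranspose_smul, conjTranspose_add, conjTranspose_mul,
      conjTranspose_mul]
    simp [add_comm]
  have hpsd : (-R).PosSemidef := .of_dotProduct_mulVec_nonneg hRherm.neg fun x => by
    rw [hquad]
    exact mul_nonneg (by norm_num) (Finset.sum_nonneg fun i _ => Finset.sum_nonneg fun j _ =>
      hL.mul_mul_sq_sub_nonneg (fun i => (hξpos i).le) x i j)
  have hker (x : Fin m → ℝ) : (-R) *ᵥ x = 0 ↔ ∃ c : ℝ, x = fun _ => c := by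
    rw [← hpsd.dotProduct_mulVec_zero_iff, hquad, mul_eq_zero, or_iff_right (by norm_num),
      hirr.sum_mul_mul_sq_sub_eq_zero_iff hL hξpos]
  have : Nonempty (Fin m) := ⟨⟨0, hm⟩⟩
  refine ⟨hpsd, hker, ?_⟩
  rw [hRherm.rootMultiplicity_zero_charpoly]
  exact finrank_ker_mulVecLin_eq_one fun x => by rw [← hker, neg_mulVec, neg_eq_zero]

theorem negR_posSemidef_kernel_span_one {m : ℕ} (hm : 0 < m)
    (L : Matrix (Fin m) (Fin m) ℝ) (ξ : Fin m → ℝ)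
    (hL : IsLaplacian L) (hirr : IsIrreducibleMatrix L)
    (hξpos : ∀ i, 0 < ξ i) (hξL : ∀ j, ∑ i, ξ i * L i j = 0) (hξsum : ∑ i, ξ i = 1)
    (R : Matrix (Fin m) (Fin m) ℝ)
    (hR : R = (1/2 : ℝ) • (Matrix.diagonal ξ * L + Lᵀ * Matrix.diagonal ξ)) :
    (-R).PosSemidef ∧
    (∀ x : Fin m → ℝ, (-R).mulVec x = 0 ↔ ∃ c : ℝ, x = fun _ => c) ∧
    (Matrix.charpoly R).rootMultiplicity 0 = 1 :=
  negR_posSemidef_kernel_span_one_general hm L ξ hL hirr hξpos hξL R hR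
end

section
/- Let L be a zero-row-sum matrix with nonnegative off-diagonal entries, ξ > 0 with ξᵀL = 0, and Ξ = diag(ξ). For any x, e ∈ ℝ^m, the bilinear cross term satisfies ∑_i ∑_{j≠i} ξ_i L_{ij}(x_j − x_i)e_j ≤ (1/4)∑_i ξ_i ∑_{j≠i} L_{ij}(x_j − x_i)² + ∑_i ξ_i |L_{ii}| e_i². -/
/-!
Bound each off-diagonal term by `ab ≤ a²/4 + b²`, weighted by `ξ_i L_ij ≥ 0`. The first half
is the quadratic term; in the second, `e_j²` is weighted by the off-diagonal column sum
`∑_{i ≠ j} ξ_i L_ij`, which `ξᵀL = 0` turns into `-ξ_j L_jj = ξ_j |L_jj|`.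
-/

open Matrix Finset

theorem mul_le_sq_div_four_add_sq (a b : ℝ) : a * b ≤ a ^ 2 / 4 + b ^ 2 := by
  nlinarith [sq_nonneg (a / 2 - b)]

section OffDiagonal

variable {ι : Type*} [Fintype ι] [DecidableEq ι]

theorem sum_sum_erase_comm {M : Type*} [AddCommMonoid M] (f : ι → ι → M) :
    ∑ i, ∑ j ∈ univ.erase i, f i j = ∑ j, ∑ i ∈ univ.erase j, f i j :=
  sum_comm' fun i j => by simp only [mem_univ, mem_erase, true_and, and_true, ne_comm]

theorem diag_nonpos_of_offDiag_nonneg_of_sum_eq_zero (L : Matrix ι ι ℝ)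
    (hoff : ∀ i j, i ≠ j → 0 ≤ L i j) (hdiag : ∀ i, L i i = -∑ j ∈ univ.erase i, L i j)
    (i : ι) : L i i ≤ 0 := by
  rw [hdiag i, neg_nonpos]
  exact sum_nonneg fun j hj => hoff i j (ne_of_mem_erase hj).symm

theorem sum_erase_mul_eq_neg_of_sum_mul_eq_zero {R : Type*} [CommRing R] (L : Matrix ι ι R)
    (ξ : ι → R) (j : ι) (hξL : ∑ i, ξ i * L i j = 0) :
    ∑ i ∈ univ.erase j, ξ i * L i j = -(ξ j * L j j) := by
  rw [sum_erase_eq_sub (mem_univ j), hξL, zero_sub]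

end OffDiagonal

theorem cross_term_bound_general {m : ℕ}
    (L : Matrix (Fin m) (Fin m) ℝ)
    (hoff : ∀ i j, i ≠ j → 0 ≤ L i j)
    (hdiag : ∀ i, L i i = -∑ j ∈ Finset.univ.erase i, L i j)
    (ξ : Fin m → ℝ) (hξpos : ∀ i, 0 < ξ i)
    (hξL : ∀ j, ∑ i, ξ i * L i j = 0)
    (x e : Fin m → ℝ) :
    ∑ i, ∑ j ∈ Finset.univ.erase i, ξ i * L i j * (x j - x i) * e j ≤
      (1/4 : ℝ) * ∑ i, ξ i * ∑ j ∈ Finset.univ.erase i, L i j * (x j - x i) ^ 2 +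
      ∑ i, ξ i * |L i i| * (e i) ^ 2 := by
  have hcol : ∀ j, ∑ i ∈ univ.erase j, ξ i * L i j = ξ j * |L j j| := fun j => by
    rw [sum_erase_mul_eq_neg_of_sum_mul_eq_zero L ξ j (hξL j),
      abs_of_nonpos (diag_nonpos_of_offDiag_nonneg_of_sum_eq_zero L hoff hdiag j)]
    ring
  calc ∑ i, ∑ j ∈ univ.erase i, ξ i * L i j * (x j - x i) * e j
      ≤ ∑ i, ∑ j ∈ univ.erase i,
          (ξ i * L i j * ((x j - x i) ^ 2 / 4) + ξ i * L i j * e j ^ 2) := by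
        gcongr with i _ j hj
        rw [mul_assoc, ← mul_add]
        exact mul_le_mul_of_nonneg_left (mul_le_sq_div_four_add_sq _ _)
          (mul_nonneg (hξpos i).le (hoff i j (ne_of_mem_erase hj).symm))
    _ = (1/4 : ℝ) * ∑ i, ξ i * ∑ j ∈ univ.erase i, L i j * (x j - x i) ^ 2 +
          ∑ j, (∑ i ∈ univ.erase j, ξ i * L i j) * e j ^ 2 := by
        simp only [sum_add_distrib, mul_sum, sum_mul]
        rw [sum_sum_erase_comm fun i j => ξ i * L i j * e j ^ 2]
        congr 1
        exact sum_congr rfl fun i _ => sum_congr rfl fun j _ => by ring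
    _ = _ := by simp only [hcol]

theorem cross_term_bound {m : ℕ} (hm : 0 < m)
    (L : Matrix (Fin m) (Fin m) ℝ)
    (hoff : ∀ i j, i ≠ j → 0 ≤ L i j)
    (hdiag : ∀ i, L i i = -∑ j ∈ Finset.univ.erase i, L i j)
    (ξ : Fin m → ℝ) (hξpos : ∀ i, 0 < ξ i)
    (hξL : ∀ j, ∑ i, ξ i * L i j = 0)
    (x e : Fin m → ℝ) :
    ∑ i, ∑ j ∈ Finset.univ.erase i, ξ i * L i j * (x j - x i) * e j ≤
      (1/4 : ℝ) * ∑ i, ξ i * ∑ j ∈ Finset.univ.erase i, L i j * (x j - x i) ^ 2 +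
      ∑ i, ξ i * |L i i| * (e i) ^ 2 :=
  cross_term_bound_general L hoff hdiag ξ hξpos hξL x e
end

section
/- Let x satisfy ẋ(t) = L x̂(t) with x̂(t) = x(t) + e(t), where L is an irreducible zero-row-sum Laplacian, ξ its positive normalized left null vector, V(t) = (1/2)∑_i ξ_i (x_i(t) − x̄(t))² with x̄(t) = ξᵀx(t). If for all t and all i, |e_i(t)|² ≤ (γ_i/(4|L_{ii}|)) ∑_{j≠i} L_{ij}(x_j(t) − x_i(t))² with γ_i ∈ (0,1), then V'(t) ≤ −((1−γ)λ₂/μ_m) V(t), where γ = max_i γ_i, λ₂ is the smallest positive eigenvalue of −(ΞL+LᵀΞ)/2 and μ_m the largest eigenvalue of Ξ − ξξᵀ. -/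
/-!
Since `ξᵀL = 0`, the weighted mean `ξᵀx` is conserved, so `V' = xᵀΞL(x + e) = -S/2 + xᵀΞLe`
with `S = ∑ᵢⱼ ξᵢ Lᵢⱼ (xⱼ - xᵢ)²`, the Dirichlet energy of `x`. Recentring each column of the
cross term at `xⱼ` (again `ξᵀL = 0`), Young's inequality and the triggering rule bound it by
`(1 + γ) S / 4`, whence `V' ≤ -(1 - γ) S / 4`.

Both `2V = xᵀUx` and `S = 2 xᵀ(-R)x` are unchanged when `x` is shifted along `𝟙`, so `x` may be
replaced by its projection `z` onto `𝟙ᗮ`, which by irreducibility is orthogonal to the kernel of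
`-R`. The Rayleigh bounds `2V ≤ μ_m ‖z‖²` and `2λ₂ ‖z‖² ≤ S` then give `4λ₂ V ≤ μ_m S`; when
`μ_m ≤ 0` they force `V = 0`.
-/

open Matrix Finset

open Module.End

namespace LinearMap.IsSymmetric

variable {E : Type*} [NormedAddCommGroup E] [InnerProductSpace ℝ E] [FiniteDimensional ℝ E]
  {T : E →ₗ[ℝ] E}

open scoped RealInnerProductSpace

theorem inner_apply_self_eq_sum (hT : T.IsSymmetric) (v : E) :
    ⟪T v, v⟫ = ∑ i, hT.eigenvalues rfl i * ⟪v, hT.eigenvectorBasis rfl i⟫ ^ 2 := by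
  rw [← (hT.eigenvectorBasis rfl).sum_inner_mul_inner]
  refine Finset.sum_congr rfl fun i _ => ?_
  rw [hT v, apply_eigenvectorBasis, real_inner_smul_right, real_inner_comm v,
    RCLike.ofReal_real_eq_id, id_eq]
  ring

theorem inner_apply_self_le (hT : T.IsSymmetric) {c : ℝ}
    (hc : ∀ μ, HasEigenvalue T μ → μ ≤ c) (v : E) : ⟪T v, v⟫ ≤ c * ‖v‖ ^ 2 := by
  rw [hT.inner_apply_self_eq_sum, ← (hT.eigenvectorBasis rfl).sum_sq_inner_left, Finset.mul_sum]
  exact Finset.sum_le_sum fun i _ =>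
    mul_le_mul_of_nonneg_right (hc _ (hT.hasEigenvalue_eigenvalues rfl i)) (sq_nonneg _)

theorem le_inner_apply_self (hT : T.IsSymmetric) {c : ℝ}
    (hc : ∀ μ, HasEigenvalue T μ → μ ≠ 0 → c ≤ μ) {v : E} (hv : v ∈ (LinearMap.ker T)ᗮ) :
    c * ‖v‖ ^ 2 ≤ ⟪T v, v⟫ := by
  rw [hT.inner_apply_self_eq_sum, ← (hT.eigenvectorBasis rfl).sum_sq_inner_left, Finset.mul_sum]
  refine Finset.sum_le_sum fun i _ => ?_
  by_cases h0 : hT.eigenvalues rfl i = 0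
  · have hker : hT.eigenvectorBasis rfl i ∈ LinearMap.ker T := by
      rw [LinearMap.mem_ker, apply_eigenvectorBasis, h0]; simp
    simp [h0, (Submodule.mem_orthogonal' _ _).1 hv _ hker]
  · exact mul_le_mul_of_nonneg_right (hc _ (hT.hasEigenvalue_eigenvalues rfl i) h0) (sq_nonneg _)

end LinearMap.IsSymmetric

namespace Matrix

variable {n : Type*} [Fintype n] [DecidableEq n] {A : Matrix n n ℝ}

theorem hasEigenvalue_toEuclideanLin_iff {μ : ℝ} :
    HasEigenvalue (toEuclideanLin A) μ ↔ HasEigenvalue (toLin' A) μ := by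
  rw [hasEigenvalue_iff_mem_spectrum, hasEigenvalue_iff_mem_spectrum, spectrum_toLpLin,
    spectrum_toLin']

theorem IsHermitian.dotProduct_mulVec_le (hA : A.IsHermitian) {c : ℝ}
    (hc : ∀ μ, HasEigenvalue (toLin' A) μ → μ ≤ c) (v : n → ℝ) :
    v ⬝ᵥ A *ᵥ v ≤ c * (v ⬝ᵥ v) := by
  have := (isSymmetric_toEuclideanLin_iff.mpr hA).inner_apply_self_le
    (fun μ hμ => hc μ (hasEigenvalue_toEuclideanLin_iff.1 hμ)) (WithLp.toLp 2 v)
  rwa [← real_inner_self_eq_norm_sq, toLpLin_toLp, toLin'_apply, EuclideanSpace.inner_toLp_toLp,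
    EuclideanSpace.inner_toLp_toLp, star_trivial, star_trivial] at this

theorem IsHermitian.le_dotProduct_mulVec (hA : A.IsHermitian) {c : ℝ}
    (hc : ∀ μ, HasEigenvalue (toLin' A) μ → μ ≠ 0 → c ≤ μ) {v : n → ℝ}
    (hv : ∀ w, A *ᵥ w = 0 → w ⬝ᵥ v = 0) :
    c * (v ⬝ᵥ v) ≤ v ⬝ᵥ A *ᵥ v := by
  have := (isSymmetric_toEuclideanLin_iff.mpr hA).le_inner_apply_self
    (fun μ hμ => hc μ (hasEigenvalue_toEuclideanLin_iff.1 hμ)) (v := WithLp.toLp 2 v) ?_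
  · rwa [← real_inner_self_eq_norm_sq, toLpLin_toLp, toLin'_apply, EuclideanSpace.inner_toLp_toLp,
      EuclideanSpace.inner_toLp_toLp, star_trivial, star_trivial] at this
  · rw [Submodule.mem_orthogonal']
    intro w hw
    have := hv (WithLp.ofLp w) (by simpa [toLpLin_apply] using congrArg WithLp.ofLp hw)
    simpa [EuclideanSpace.inner_eq_star_dotProduct, dotProduct_comm] using this

end Matrix

-- Also covers `a = 0`, where `g / (4 * a)` is `0` by convention.
theorem mul_sq_le_of_sq_le_div {a e g γ T : ℝ} (ha : 0 ≤ a) (hT : 0 ≤ T) (hg : 0 ≤ g)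
    (hgγ : g ≤ γ) (he : e ^ 2 ≤ g / (4 * a) * T) : a * e ^ 2 ≤ γ / 4 * T := by
  rcases ha.eq_or_lt with rfl | ha
  · rw [zero_mul]
    have := hg.trans hgγ
    positivity
  calc a * e ^ 2 ≤ a * (g / (4 * a) * T) := mul_le_mul_of_nonneg_left he ha.le
    _ = g / 4 * T := by field_simp
    _ ≤ γ / 4 * T := by gcongr

section Laplacian

variable {ι : Type*} [Fintype ι] (ξ : ι → ℝ) (L : Matrix ι ι ℝ)

def dirichletEnergy (v : ι → ℝ) : ℝ :=
  ∑ i, ∑ j, ξ i * L i j * (v j - v i) ^ 2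

theorem dirichletEnergy_sub_const (v : ι → ℝ) (c : ℝ) :
    dirichletEnergy ξ L (fun i => v i - c) = dirichletEnergy ξ L v := by
  simp only [dirichletEnergy, sub_sub_sub_cancel_right]

variable [DecidableEq ι]

theorem dotProduct_diagonal_mul_mulVec (v w : ι → ℝ) :
    v ⬝ᵥ (diagonal ξ * L) *ᵥ w = ∑ i, ∑ j, ξ i * L i j * v i * w j := by
  simp only [dotProduct, mulVec, diagonal_mul, mul_sum]
  exact sum_congr rfl fun i _ => sum_congr rfl fun j _ => by ring

variable {ξ L}

theorem dirichletEnergy_eq (hrow : ∀ i, ∑ j, L i j = 0) (hcol : ∀ j, ∑ i, ξ i * L i j = 0)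
    (v : ι → ℝ) : dirichletEnergy ξ L v = -2 * (v ⬝ᵥ (diagonal ξ * L) *ᵥ v) := by
  have hsq_right : ∑ i, ∑ j, ξ i * L i j * v j ^ 2 = 0 := by
    rw [sum_comm]
    exact sum_eq_zero fun j _ => by rw [← sum_mul, hcol j, zero_mul]
  have hsq_left : ∑ i, ∑ j, ξ i * L i j * v i ^ 2 = 0 :=
    sum_eq_zero fun i _ => by rw [← sum_mul, ← mul_sum, hrow i, mul_zero, zero_mul]
  have hexpand : ∀ i j, ξ i * L i j * (v j - v i) ^ 2 =
      ξ i * L i j * v j ^ 2 - 2 * (ξ i * L i j * v i * v j) + ξ i * L i j * v i ^ 2 :=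
    fun i j => by ring
  simp only [dirichletEnergy, hexpand, sum_add_distrib, sum_sub_distrib, ← mul_sum, hsq_right,
    hsq_left, dotProduct_diagonal_mul_mulVec]
  ring

theorem dotProduct_neg_symmetrization_mulVec (v : ι → ℝ) :
    v ⬝ᵥ (-((1 / 2 : ℝ) • (diagonal ξ * L + Lᵀ * diagonal ξ))) *ᵥ v =
      -(v ⬝ᵥ (diagonal ξ * L) *ᵥ v) := by
  have htranspose : v ⬝ᵥ (Lᵀ * diagonal ξ) *ᵥ v = v ⬝ᵥ (diagonal ξ * L) *ᵥ v := by
    rw [show Lᵀ * diagonal ξ = (diagonal ξ * L)ᵀ by rw [transpose_mul, diagonal_transpose],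
      dotProduct_transpose_mulVec]
  rw [neg_mulVec, smul_mulVec, add_mulVec, dotProduct_neg, dotProduct_smul, dotProduct_add,
    htranspose, smul_eq_mul]
  ring

theorem isHermitian_neg_symmetrization :
    (-((1 / 2 : ℝ) • (diagonal ξ * L + Lᵀ * diagonal ξ))).IsHermitian := by
  simp only [IsHermitian, conjTranspose_eq_transpose_of_trivial, transpose_neg, transpose_smul,
    transpose_add, transpose_mul, transpose_transpose, diagonal_transpose, add_comm]

theorem dirichletEnergy_eq_two_mul (hrow : ∀ i, ∑ j, L i j = 0)
    (hcol : ∀ j, ∑ i, ξ i * L i j = 0) (v : ι → ℝ) :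
    dirichletEnergy ξ L v =
      2 * (v ⬝ᵥ (-((1 / 2 : ℝ) • (diagonal ξ * L + Lᵀ * diagonal ξ))) *ᵥ v) := by
  rw [dotProduct_neg_symmetrization_mulVec, dirichletEnergy_eq hrow hcol]
  ring

theorem dotProduct_diagonal_mul_mulVec_le (hξ : ∀ i, 0 ≤ ξ i)
    (hoff : ∀ i j, i ≠ j → 0 ≤ L i j) (hcol : ∀ j, ∑ i, ξ i * L i j = 0) (v e : ι → ℝ) :
    v ⬝ᵥ (diagonal ξ * L) *ᵥ e ≤ ∑ j, ξ j * -L j j * e j ^ 2 + dirichletEnergy ξ L v / 4 := by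
  have hcentre : ∀ j, ∑ i, ξ i * L i j * v i * e j =
      ∑ i ∈ univ.erase j, ξ i * L i j * (v i - v j) * e j := by
    intro j
    rw [sum_erase _ (by simp)]
    simp only [mul_sub, sub_mul, sum_sub_distrib, ← sum_mul, hcol j, zero_mul, sub_zero]
  have hdiag : ∀ j, ∑ i ∈ univ.erase j, ξ i * L i j = ξ j * -L j j := by
    intro j
    rw [sum_erase_eq_sub (mem_univ j), hcol j]
    ring
  have hyoung : ∀ j, ∀ i ∈ univ.erase j, ξ i * L i j * (v i - v j) * e j ≤
      ξ i * L i j * e j ^ 2 + ξ i * L i j * (v j - v i) ^ 2 / 4 := by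
    intro j i hi
    have hw : 0 ≤ ξ i * L i j := mul_nonneg (hξ i) (hoff i j (ne_of_mem_erase hi))
    nlinarith [mul_nonneg hw (sq_nonneg ((v i - v j) / 2 - e j))]
  have henergy : ∑ j, ∑ i ∈ univ.erase j, ξ i * L i j * (v j - v i) ^ 2 =
      dirichletEnergy ξ L v := by
    rw [dirichletEnergy, sum_comm]
    exact sum_congr rfl fun j _ => sum_erase _ (by simp)
  calc v ⬝ᵥ (diagonal ξ * L) *ᵥ e
      = ∑ j, ∑ i ∈ univ.erase j, ξ i * L i j * (v i - v j) * e j := by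
        rw [dotProduct_diagonal_mul_mulVec, sum_comm]
        exact sum_congr rfl fun j _ => hcentre j
    _ ≤ ∑ j, ∑ i ∈ univ.erase j, (ξ i * L i j * e j ^ 2 + ξ i * L i j * (v j - v i) ^ 2 / 4) :=
        sum_le_sum fun j _ => sum_le_sum (hyoung j)
    _ = ∑ j, ξ j * -L j j * e j ^ 2 + dirichletEnergy ξ L v / 4 := by
        simp only [sum_add_distrib, ← sum_mul, hdiag, ← sum_div, henergy]

theorem sum_mul_sum_erase_eq_dirichletEnergy (v : ι → ℝ) :
    ∑ i, ξ i * ∑ j ∈ univ.erase i, L i j * (v j - v i) ^ 2 = dirichletEnergy ξ L v := by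
  refine sum_congr rfl fun i _ => ?_
  rw [sum_erase _ (by simp), mul_sum]
  exact sum_congr rfl fun j _ => by ring

theorem diag_nonpos_of_row_sum_eq_zero (hoff : ∀ i j, i ≠ j → 0 ≤ L i j)
    (hrow : ∀ i, ∑ j, L i j = 0) (i : ι) : L i i ≤ 0 := by
  have h := hrow i
  rw [← add_sum_erase _ _ (mem_univ i)] at h
  linarith [sum_nonneg fun j (hj : j ∈ univ.erase i) => hoff i j (ne_of_mem_erase hj).symm]

theorem dotProduct_diagonal_mul_mulVec_add_le_of_trigger (hξ : ∀ i, 0 ≤ ξ i)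
    (hoff : ∀ i j, i ≠ j → 0 ≤ L i j) (hrow : ∀ i, ∑ j, L i j = 0)
    (hcol : ∀ j, ∑ i, ξ i * L i j = 0) {γi : ι → ℝ} {γ : ℝ} (hγi : ∀ i, 0 ≤ γi i)
    (hγ : ∀ i, γi i ≤ γ) {v e : ι → ℝ}
    (htrigger : ∀ i,
      e i ^ 2 ≤ γi i / (4 * |L i i|) * ∑ j ∈ univ.erase i, L i j * (v j - v i) ^ 2) :
    v ⬝ᵥ (diagonal ξ * L) *ᵥ (v + e) ≤ -((1 - γ) / 4) * dirichletEnergy ξ L v := by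
  have hdiag : ∀ i, |L i i| = -L i i := fun i =>
    abs_of_nonpos (diag_nonpos_of_row_sum_eq_zero hoff hrow i)
  have herror : ∑ i, ξ i * -L i i * e i ^ 2 ≤ γ / 4 * dirichletEnergy ξ L v := by
    rw [← sum_mul_sum_erase_eq_dirichletEnergy, mul_sum]
    refine sum_le_sum fun i _ => ?_
    have hT : 0 ≤ ∑ j ∈ univ.erase i, L i j * (v j - v i) ^ 2 :=
      sum_nonneg fun j hj => mul_nonneg (hoff i j (ne_of_mem_erase hj).symm) (sq_nonneg _)
    have := mul_sq_le_of_sq_le_div (abs_nonneg _) hT (hγi i) (hγ i) (htrigger i)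
    rw [hdiag] at this
    nlinarith [mul_le_mul_of_nonneg_left this (hξ i)]
  have hcross := dotProduct_diagonal_mul_mulVec_le hξ hoff hcol v e
  have hquad : v ⬝ᵥ (diagonal ξ * L) *ᵥ v = -(dirichletEnergy ξ L v / 2) := by
    rw [dirichletEnergy_eq hrow hcol]; ring
  rw [mulVec_add, dotProduct_add, hquad]
  linarith

end Laplacian

theorem eq_of_dirichletEnergy_eq_zero {m : ℕ} {ξ : Fin m → ℝ} {L : Matrix (Fin m) (Fin m) ℝ}
    (hξ : ∀ i, 0 < ξ i) (hoff : ∀ i j, i ≠ j → 0 ≤ L i j) (hirr : IsIrreducibleMatrix L)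
    {v : Fin m → ℝ} (hv : dirichletEnergy ξ L v = 0) (i j : Fin m) : v i = v j := by
  have hterm : ∀ a b, ξ a * L a b * (v b - v a) ^ 2 = 0 := by
    have hnn : ∀ a b, 0 ≤ ξ a * L a b * (v b - v a) ^ 2 := fun a b => by
      rcases eq_or_ne a b with rfl | hab
      · simp
      · exact mul_nonneg (mul_nonneg (hξ a).le (hoff a b hab)) (sq_nonneg _)
    intro a b
    have hrow := (sum_eq_zero_iff_of_nonneg fun a _ => sum_nonneg fun b _ => hnn a b).1 hv a
      (mem_univ a)
    exact (sum_eq_zero_iff_of_nonneg fun b _ => hnn a b).1 hrow b (mem_univ b)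
  have hedge : ∀ a b, a ≠ b ∧ 0 < L a b → v a = v b := by
    rintro a b ⟨-, hab⟩
    have := hterm a b
    have hw : ξ a * L a b ≠ 0 := (mul_pos (hξ a) hab).ne'
    have := pow_eq_zero_iff (n := 2) two_ne_zero |>.1 ((mul_eq_zero.1 this).resolve_left hw)
    linarith
  have hpath : ∀ a b, Relation.TransGen (fun a b => a ≠ b ∧ 0 < L a b) a b → v a = v b :=
    fun a b h => by
      induction h with
      | single h => exact hedge _ _ h
      | tail _ h ih => exact ih.trans (hedge _ _ h)
  rcases eq_or_ne i j with rfl | hij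
  · rfl
  · exact hpath i j (hirr i j hij)

theorem isHermitian_diagonal_sub_vecMulVec {ι : Type*} [DecidableEq ι] (ξ : ι → ℝ) :
    (diagonal ξ - vecMulVec ξ ξ).IsHermitian := by
  simp only [IsHermitian, conjTranspose_eq_transpose_of_trivial, transpose_sub,
    diagonal_transpose, transpose_vecMulVec]

section Variance

variable {ι : Type*} [Fintype ι] {ξ : ι → ℝ}

def weightedVariance (ξ v : ι → ℝ) : ℝ :=
  ∑ i, ξ i * (v i - ∑ j, ξ j * v j) ^ 2

theorem weightedVariance_nonneg (hξ : ∀ i, 0 ≤ ξ i) (v : ι → ℝ) : 0 ≤ weightedVariance ξ v :=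
  sum_nonneg fun i _ => mul_nonneg (hξ i) (sq_nonneg _)

theorem weightedVariance_sub_const (hξ : ∑ i, ξ i = 1) (v : ι → ℝ) (c : ℝ) :
    weightedVariance ξ (fun i => v i - c) = weightedVariance ξ v := by
  have hmean : ∑ j, ξ j * (v j - c) = ∑ j, ξ j * v j - c := by
    simp only [mul_sub, sum_sub_distrib, ← sum_mul, hξ, one_mul]
  simp only [weightedVariance, hmean, sub_sub_sub_cancel_right]

theorem weightedVariance_eq (hξ : ∑ i, ξ i = 1) (v : ι → ℝ) :
    weightedVariance ξ v = ∑ i, ξ i * v i ^ 2 - (∑ i, ξ i * v i) ^ 2 := by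
  have hexpand : ∀ i, ξ i * (v i - ∑ j, ξ j * v j) ^ 2 =
      ξ i * v i ^ 2 - 2 * (ξ i * v i) * ∑ j, ξ j * v j + ξ i * (∑ j, ξ j * v j) ^ 2 :=
    fun i => by ring
  simp only [weightedVariance, hexpand, sum_add_distrib, sum_sub_distrib, ← sum_mul, ← mul_sum,
    hξ]
  ring

theorem dotProduct_diagonal_sub_vecMulVec_mulVec [DecidableEq ι] (v : ι → ℝ) :
    v ⬝ᵥ (diagonal ξ - vecMulVec ξ ξ) *ᵥ v = ∑ i, ξ i * v i ^ 2 - (∑ i, ξ i * v i) ^ 2 := by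
  have hdiag : ∑ i, v i * (ξ i * v i) = ∑ i, ξ i * v i ^ 2 := sum_congr rfl fun i _ => by ring
  have hmean : ∑ i, v i * ξ i = ∑ i, ξ i * v i := sum_congr rfl fun i _ => mul_comm _ _
  rw [sub_mulVec, dotProduct_sub, vecMulVec_mulVec, dotProduct_smul]
  simp only [dotProduct, mulVec_diagonal, op_smul_eq_mul, hdiag, hmean, sq]

theorem hasDerivAt_weightedVariance [DecidableEq ι] {x : ℝ → ι → ℝ} {D : ι → ℝ} {t : ℝ}
    (hx : ∀ i, HasDerivAt (fun s => x s i) (D i) t) (hD : ξ ⬝ᵥ D = 0) :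
    HasDerivAt (fun s => weightedVariance ξ (x s)) (2 * (x t ⬝ᵥ diagonal ξ *ᵥ D)) t := by
  have hmean : HasDerivAt (fun s => ∑ j, ξ j * x s j) 0 t := by
    simpa [← hD, dotProduct] using HasDerivAt.fun_sum fun j _ => (hx j).const_mul (ξ j)
  have hterm : ∀ i, ξ i * ((2 : ℕ) * (x t i - ∑ j, ξ j * x t j) ^ (2 - 1) * (D i - 0)) =
      2 * (x t i * (ξ i * D i)) - 2 * (∑ j, ξ j * x t j) * (ξ i * D i) := fun i => by
    push_cast; ring
  refine (HasDerivAt.fun_sum fun i _ =>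
    (((hx i).fun_sub hmean).fun_pow 2).const_mul (ξ i)).congr_deriv ?_
  rw [sum_congr rfl fun i _ => hterm i, sum_sub_distrib, ← mul_sum, ← mul_sum]
  rw [dotProduct] at hD
  simp only [hD, mul_zero, sub_zero, dotProduct, mulVec_diagonal]

end Variance

section Centering

variable {ι : Type*} [Fintype ι]

noncomputable def centered (v : ι → ℝ) : ι → ℝ := fun i => v i - (∑ k, v k) / Fintype.card ι

theorem sum_centered (v : ι → ℝ) : ∑ i, centered v i = 0 := by
  rcases isEmpty_or_nonempty ι with hι | hι
  · simp
  · simp only [centered, sum_sub_distrib, sum_const, card_univ, nsmul_eq_mul]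
    field_simp
    ring

theorem dotProduct_eq_zero_of_forall_eq {w v : ι → ℝ} (hw : ∀ i j, w i = w j)
    (hv : ∑ i, v i = 0) : w ⬝ᵥ v = 0 := by
  rcases isEmpty_or_nonempty ι with hι | ⟨⟨i₀⟩⟩
  · simp [dotProduct]
  · rw [dotProduct, sum_congr rfl fun i _ => by rw [hw i i₀], ← mul_sum, hv, mul_zero]

theorem weightedVariance_le_mul_centered [DecidableEq ι] {ξ : ι → ℝ} (hξ : ∑ i, ξ i = 1)
    {c : ℝ} (hc : ∀ μ, HasEigenvalue (toLin' (diagonal ξ - vecMulVec ξ ξ)) μ → μ ≤ c)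
    (v : ι → ℝ) : weightedVariance ξ v ≤ c * (centered v ⬝ᵥ centered v) := by
  rw [← weightedVariance_sub_const hξ v ((∑ k, v k) / Fintype.card ι), weightedVariance_eq hξ,
    ← dotProduct_diagonal_sub_vecMulVec_mulVec]
  exact (isHermitian_diagonal_sub_vecMulVec ξ).dotProduct_mulVec_le hc _

end Centering

theorem two_mul_centered_le_dirichletEnergy {m : ℕ} {ξ : Fin m → ℝ}
    {L : Matrix (Fin m) (Fin m) ℝ} (hξ : ∀ i, 0 < ξ i) (hoff : ∀ i j, i ≠ j → 0 ≤ L i j)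
    (hrow : ∀ i, ∑ j, L i j = 0) (hcol : ∀ j, ∑ i, ξ i * L i j = 0)
    (hirr : IsIrreducibleMatrix L) {c : ℝ}
    (hc : ∀ μ, HasEigenvalue
      (toLin' (-((1 / 2 : ℝ) • (diagonal ξ * L + Lᵀ * diagonal ξ)))) μ → μ ≠ 0 → c ≤ μ)
    (v : Fin m → ℝ) : 2 * c * (centered v ⬝ᵥ centered v) ≤ dirichletEnergy ξ L v := by
  have hker : ∀ w, (-((1 / 2 : ℝ) • (diagonal ξ * L + Lᵀ * diagonal ξ))) *ᵥ w = 0 →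
      w ⬝ᵥ centered v = 0 := fun w hw =>
    dotProduct_eq_zero_of_forall_eq (eq_of_dirichletEnergy_eq_zero hξ hoff hirr
      (by rw [dirichletEnergy_eq_two_mul hrow hcol, hw, dotProduct_zero, mul_zero]))
      (sum_centered v)
  have := isHermitian_neg_symmetrization.le_dotProduct_mulVec hc hker
  calc 2 * c * (centered v ⬝ᵥ centered v)
      ≤ 2 * (centered v ⬝ᵥ
          (-((1 / 2 : ℝ) • (diagonal ξ * L + Lᵀ * diagonal ξ))) *ᵥ centered v) := by
        linarith
    _ = dirichletEnergy ξ L (centered v) := (dirichletEnergy_eq_two_mul hrow hcol _).symm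
    _ = dirichletEnergy ξ L v := dirichletEnergy_sub_const ξ L v _

theorem le_neg_mul_of_energy_bounds {d S V q c lam mu : ℝ} (hc : 0 ≤ c) (hlam : 0 ≤ lam)
    (hV : 0 ≤ V) (hq : 0 ≤ q) (hd : d ≤ -(c / 4) * S) (hS : 2 * lam * q ≤ S)
    (hVq : 2 * V ≤ mu * q) : d ≤ -(c * lam / mu) * V := by
  have hS0 : 0 ≤ S := le_trans (by positivity) hS
  rcases le_or_gt mu 0 with hmu | hmu
  · have hV0 : V = 0 := le_antisymm (by nlinarith) hV
    rw [hV0, mul_zero]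
    nlinarith [mul_nonneg hc hS0]
  · have hlamV : 4 * lam * V ≤ mu * S := by
      nlinarith [mul_le_mul_of_nonneg_left hVq hlam, mul_le_mul_of_nonneg_left hS hmu.le]
    have hkey : c * lam * V ≤ c / 4 * S * mu := by nlinarith [mul_le_mul_of_nonneg_left hlamV hc]
    calc d ≤ -(c / 4) * S := hd
      _ ≤ -(c * lam / mu) * V := by
        rw [neg_mul, neg_mul, neg_le_neg_iff, div_mul_eq_mul_div, div_le_iff₀ hmu]
        exact hkey

theorem event_triggered_lyapunov_decay_general {m : ℕ}
    (L : Matrix (Fin m) (Fin m) ℝ)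
    (hL : IsLaplacian L) (hirr : IsIrreducibleMatrix L)
    (ξ : Fin m → ℝ) (hξpos : ∀ i, 0 < ξ i)
    (hξL : ∀ j, ∑ i, ξ i * L i j = 0) (hξsum : ∑ i, ξ i = 1)
    (R U : Matrix (Fin m) (Fin m) ℝ)
    (hR : R = (1/2 : ℝ) • (Matrix.diagonal ξ * L + Lᵀ * Matrix.diagonal ξ))
    (hU : U = Matrix.diagonal ξ - Matrix.vecMulVec ξ ξ)
    (lam2 mum : ℝ)
    -- `lam2` is the smallest positive eigenvalue of `-R`
    (hlam2pos : 0 < lam2)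
    (hlam2min : ∀ μ : ℝ, Module.End.HasEigenvalue (Matrix.toLin' (-R)) μ → μ ≠ 0 → lam2 ≤ μ)
    -- `mum` is the largest eigenvalue of `U`
    (hmummax : ∀ μ : ℝ, Module.End.HasEigenvalue (Matrix.toLin' U) μ → μ ≤ mum)
    (x e : ℝ → Fin m → ℝ)
    (hderiv : ∀ t : ℝ, ∀ i : Fin m,
      HasDerivAt (fun s => x s i) (L.mulVec (fun j => x t j + e t j) i) t)
    (γi : Fin m → ℝ) (hγi : ∀ i, γi i ∈ Set.Ioo (0:ℝ) 1)
    (γ : ℝ) (hγ : IsGreatest (Set.range γi) γ)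
    (htrigger : ∀ t : ℝ, ∀ i : Fin m,
      (e t i) ^ 2 ≤ γi i / (4 * |L i i|) *
        ∑ j ∈ Finset.univ.erase i, L i j * (x t j - x t i) ^ 2)
    (V : ℝ → ℝ)
    (hV : ∀ t, V t = (1/2 : ℝ) * ∑ i, ξ i * (x t i - ∑ j, ξ j * x t j) ^ 2) :
    ∀ t : ℝ, deriv V t ≤ -((1 - γ) * lam2 / mum) * V t := by
  intro t
  subst hR hU
  obtain ⟨⟨i₀, rfl⟩, hγmax⟩ := hγ
  have hVeq : V = fun s => weightedVariance ξ (x s) / 2 :=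
    funext fun s => by rw [hV, weightedVariance]; ring
  have hconserved : ξ ⬝ᵥ L *ᵥ (fun j => x t j + e t j) = 0 := by
    rw [dotProduct_mulVec, show ξ ᵥ* L = 0 from funext hξL, zero_dotProduct]
  have hVderiv : HasDerivAt V (x t ⬝ᵥ (diagonal ξ * L) *ᵥ (fun j => x t j + e t j)) t := by
    rw [hVeq, ← mulVec_mulVec]
    exact ((hasDerivAt_weightedVariance (hderiv t) hconserved).div_const 2).congr_deriv
      (mul_div_cancel_left₀ _ two_ne_zero)
  have hdecay : deriv V t ≤ -((1 - γi i₀) / 4) * dirichletEnergy ξ L (x t) := by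
    rw [hVderiv.deriv]
    exact dotProduct_diagonal_mul_mulVec_add_le_of_trigger (fun i => (hξpos i).le) hL.1 hL.2 hξL
      (fun i => (hγi i).1.le) (fun i => hγmax ⟨i, rfl⟩) (htrigger t)
  have hlower := two_mul_centered_le_dirichletEnergy hξpos hL.1 hL.2 hξL hirr hlam2min (x t)
  have hupper : 2 * V t ≤ mum * (centered (x t) ⬝ᵥ centered (x t)) := by
    rw [hVeq, mul_div_cancel₀ _ two_ne_zero]
    exact weightedVariance_le_mul_centered hξsum hmummax (x t)
  have hVnonneg : 0 ≤ V t := by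
    rw [hVeq]
    exact div_nonneg (weightedVariance_nonneg (fun i => (hξpos i).le) _) zero_le_two
  exact le_neg_mul_of_energy_bounds (sub_nonneg.2 (hγi i₀).2.le) hlam2pos.le hVnonneg
    (sum_nonneg fun i _ => mul_self_nonneg _) hdecay hlower hupper

theorem event_triggered_lyapunov_decay {m : ℕ} (hm : 0 < m)
    (L : Matrix (Fin m) (Fin m) ℝ)
    (hL : IsLaplacian L) (hirr : IsIrreducibleMatrix L)
    (ξ : Fin m → ℝ) (hξpos : ∀ i, 0 < ξ i)
    (hξL : ∀ j, ∑ i, ξ i * L i j = 0) (hξsum : ∑ i, ξ i = 1)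
    (R U : Matrix (Fin m) (Fin m) ℝ)
    (hR : R = (1/2 : ℝ) • (Matrix.diagonal ξ * L + Lᵀ * Matrix.diagonal ξ))
    (hU : U = Matrix.diagonal ξ - Matrix.vecMulVec ξ ξ)
    (lam2 mum : ℝ)
    -- `lam2` is the smallest positive eigenvalue of `-R`
    (hlam2pos : 0 < lam2)
    (hlam2eig : Module.End.HasEigenvalue (Matrix.toLin' (-R)) lam2)
    (hlam2min : ∀ μ : ℝ, Module.End.HasEigenvalue (Matrix.toLin' (-R)) μ → μ ≠ 0 → lam2 ≤ μ)
    -- `mum` is the largest eigenvalue of `U`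
    (hmumeig : Module.End.HasEigenvalue (Matrix.toLin' U) mum)
    (hmummax : ∀ μ : ℝ, Module.End.HasEigenvalue (Matrix.toLin' U) μ → μ ≤ mum)
    (x e : ℝ → Fin m → ℝ)
    (hderiv : ∀ t : ℝ, ∀ i : Fin m,
      HasDerivAt (fun s => x s i) (L.mulVec (fun j => x t j + e t j) i) t)
    (γi : Fin m → ℝ) (hγi : ∀ i, γi i ∈ Set.Ioo (0:ℝ) 1)
    (γ : ℝ) (hγ : IsGreatest (Set.range γi) γ)
    (htrigger : ∀ t : ℝ, ∀ i : Fin m,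
      (e t i) ^ 2 ≤ γi i / (4 * |L i i|) *
        ∑ j ∈ Finset.univ.erase i, L i j * (x t j - x t i) ^ 2)
    (V : ℝ → ℝ)
    (hV : ∀ t, V t = (1/2 : ℝ) * ∑ i, ξ i * (x t i - ∑ j, ξ j * x t j) ^ 2) :
    ∀ t : ℝ, deriv V t ≤ -((1 - γ) * lam2 / mum) * V t :=
  event_triggered_lyapunov_decay_general L hL hirr ξ hξpos hξL hξsum R U hR hU lam2 mum hlam2pos
    hlam2min hmummax x e hderiv γi hγi γ hγ htrigger V hV
end

section
/- Suppose x: [0,∞) → ℝ is differentiable with |ẋ(t)| ≤ M for all t, and an event sequence t_1 < t_2 < … is defined so that t_{k+1} is the first time t > t_k with |x(t) − x(t_k)| = φ e^{−αt} for constants φ > 0, α > 0. Then for any T > 0, each inter-event interval contained in [0,T] is bounded below by 1/(M e^{αT}/φ + α), and hence there are finitely many events in [0,T] (no Zeno behaviour). -/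
open Real

/-- The `α` in the denominator is slack: the threshold at time `b ≤ T` is already at least
`φ e^{-αT}`, and covering that distance at speed `M` takes time at least `φ e^{-αT} / M`. -/
lemma one_div_le_sub_of_exp_threshold_le {M φ α a b T : ℝ} (hφ : 0 < φ) (hα : 0 ≤ α)
    (hab : a ≤ b) (hbT : b ≤ T) (h : φ * exp (-α * b) ≤ M * (b - a)) :
    1 / (M * exp (α * T) / φ + α) ≤ b - a := by
  have hthreshold : φ * exp (-α * T) ≤ M * (b - a) :=
    le_trans (mul_le_mul_of_nonneg_left (exp_le_exp.2 (by nlinarith)) hφ.le) h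
  have hrate : 1 ≤ M * exp (α * T) / φ * (b - a) := by
    rw [neg_mul, exp_neg, ← div_eq_mul_inv, div_le_iff₀ (exp_pos _)] at hthreshold
    rw [div_mul_eq_mul_div, le_div_iff₀ hφ]
    linarith
  have hrate_add : 1 ≤ (M * exp (α * T) / φ + α) * (b - a) := by
    nlinarith [mul_nonneg hα (sub_nonneg.2 hab)]
  have hpos : 0 < M * exp (α * T) / φ + α :=
    pos_of_mul_pos_left (one_pos.trans_le hrate_add) (sub_nonneg.2 hab)
  rwa [div_le_iff₀' hpos]

lemma add_mul_le_of_le_sub_succ {t : ℕ → ℝ} {c T : ℝ} (ht : Monotone t)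
    (hgap : ∀ k, t (k + 1) ≤ T → c ≤ t (k + 1) - t k) :
    ∀ k, t k ≤ T → t 0 + k * c ≤ t k
  | 0, _ => by simp
  | k + 1, hk => by
    have := add_mul_le_of_le_sub_succ ht hgap k ((ht k.le_succ).trans hk)
    push_cast
    linarith [hgap k hk]

lemma finite_setOf_le_of_le_sub_succ {t : ℕ → ℝ} {c T : ℝ} (ht : Monotone t) (hc : 0 < c)
    (hgap : ∀ k, t (k + 1) ≤ T → c ≤ t (k + 1) - t k) :
    {k : ℕ | t k ≤ T}.Finite := by
  refine (Set.finite_Iic ⌊(T - t 0) / c⌋₊).subset fun k hk => Nat.le_floor ?_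
  rw [le_div_iff₀ hc]
  linarith [add_mul_le_of_le_sub_succ ht hgap k hk, show t k ≤ T from hk]

theorem no_zeno_exponential_threshold_general
    (x : ℝ → ℝ) (M φ α : ℝ) (hφ : 0 < φ) (hα : 0 < α)
    (hxdiff : Differentiable ℝ x) (hxbound : ∀ t : ℝ, |deriv x t| ≤ M)
    (t : ℕ → ℝ) (hmono : StrictMono t)
    -- `t (k+1)` is the first time after `t k` at which the deviation reaches the threshold
    (htrig : ∀ k : ℕ, |x (t (k + 1)) - x (t k)| = φ * Real.exp (-α * t (k + 1))) :
    ∀ T : ℝ, 0 < T →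
      (∀ k : ℕ, t (k + 1) ≤ T → 1 / (M * Real.exp (α * T) / φ + α) ≤ t (k + 1) - t k) ∧
      {k : ℕ | t k ≤ T}.Finite := by
  intro T _
  have hM : 0 ≤ M := (abs_nonneg _).trans (hxbound 0)
  have hlip : ∀ a b, |x b - x a| ≤ M * |b - a| := fun a b => by
    simpa only [Real.norm_eq_abs] using Convex.norm_image_sub_le_of_norm_deriv_le
      (fun y _ => hxdiff y) (fun y _ => hxbound y) convex_univ (Set.mem_univ a) (Set.mem_univ b)
  have hgap : ∀ k : ℕ, t (k + 1) ≤ T →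
      1 / (M * Real.exp (α * T) / φ + α) ≤ t (k + 1) - t k := fun k hk => by
    have hlt := hmono k.lt_succ_self
    refine one_div_le_sub_of_exp_threshold_le hφ hα.le hlt.le hk ?_
    rw [← htrig k, ← abs_of_pos (sub_pos.2 hlt)]
    exact hlip _ _
  exact ⟨hgap, finite_setOf_le_of_le_sub_succ hmono.monotone (by positivity) hgap⟩

theorem no_zeno_exponential_threshold
    (x : ℝ → ℝ) (M φ α : ℝ) (hM : 0 < M) (hφ : 0 < φ) (hα : 0 < α)
    (hxdiff : Differentiable ℝ x) (hxbound : ∀ t : ℝ, |deriv x t| ≤ M)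
    (t : ℕ → ℝ) (ht0 : 0 ≤ t 0) (hmono : StrictMono t)
    -- `t (k+1)` is the first time after `t k` at which the deviation reaches the threshold
    (htrig : ∀ k : ℕ, |x (t (k + 1)) - x (t k)| = φ * Real.exp (-α * t (k + 1)))
    (hfirst : ∀ k : ℕ, ∀ s : ℝ, t k < s → s < t (k + 1) →
      |x s - x (t k)| < φ * Real.exp (-α * s)) :
    ∀ T : ℝ, 0 < T →
      (∀ k : ℕ, t (k + 1) ≤ T → 1 / (M * Real.exp (α * T) / φ + α) ≤ t (k + 1) - t k) ∧
      {k : ℕ | t k ≤ T}.Finite :=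
  no_zeno_exponential_threshold_general x M φ α hφ hα hxdiff hxbound t hmono htrig
end

section
/- Let L_{ij} ≥ 0 for j ≠ i and L_{ii} = −∑_{j≠i}L_{ij} < 0, and let x̂ ∈ ℝ^m with u := ∑_j L_{ij}x̂_j ≠ 0. Then the time t* > t_k at which (t* − t_k)²u² = (γ_i/(4|L_{ii}|))∑_{j≠i}L_{ij}(x̂_j − x̂_i)² satisfies t* − t_k ≥ √γ_i/(2|L_{ii}|). -/
/-!
Since `L i i = -∑_{j ≠ i} L i j`, we have `u = ∑_{j ≠ i} L i j (x̂ j - x̂ i)`, and Cauchy–Schwarz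
with the nonnegative weights `L i j` gives `u² ≤ |L i i| · ∑_{j ≠ i} L i j (x̂ j - x̂ i)²`.
Feeding this into the triggering equation yields `(t* - t_k)² u² ≥ γ u² / (4 |L i i|²)`,
and dividing by `u² > 0` gives the bound.
-/

open Finset

theorem sq_sum_mul_le_sum_mul_sum_mul_sq {ι R : Type*} [CommRing R] [LinearOrder R]
    [IsStrictOrderedRing R] (s : Finset ι) {w : ι → R} (hw : ∀ j ∈ s, 0 ≤ w j) (f : ι → R) :
    (∑ j ∈ s, w j * f j) ^ 2 ≤ (∑ j ∈ s, w j) * ∑ j ∈ s, w j * f j ^ 2 :=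
  sum_sq_le_sum_mul_sum_of_sq_le_mul s hw (fun j hj ↦ mul_nonneg (hw j hj) (sq_nonneg _))
    fun _ _ ↦ le_of_eq (by ring)

section LaplacianRow

variable {ι R : Type*} [Fintype ι] [DecidableEq ι] {r : ι → R} {i : ι}

theorem sum_mul_eq_sum_erase_mul_sub [CommRing R] (hdiag : r i = -∑ j ∈ univ.erase i, r j)
    (x : ι → R) : ∑ j, r j * x j = ∑ j ∈ univ.erase i, r j * (x j - x i) := by
  simp only [mul_sub, sum_sub_distrib, ← sum_mul, ← add_sum_erase _ _ (mem_univ i), hdiag]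
  ring

theorem abs_eq_sum_erase_of_nonneg [CommRing R] [LinearOrder R] [IsStrictOrderedRing R]
    (hoff : ∀ j, j ≠ i → 0 ≤ r j) (hdiag : r i = -∑ j ∈ univ.erase i, r j) :
    |r i| = ∑ j ∈ univ.erase i, r j := by
  have hsum : 0 ≤ ∑ j ∈ univ.erase i, r j := sum_nonneg fun j hj ↦ hoff j (ne_of_mem_erase hj)
  rw [abs_of_nonpos (by linarith), hdiag, neg_neg]

theorem sq_sum_mul_le_abs_mul_sum_erase_mul_sq_sub [CommRing R] [LinearOrder R]
    [IsStrictOrderedRing R] (hoff : ∀ j, j ≠ i → 0 ≤ r j)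
    (hdiag : r i = -∑ j ∈ univ.erase i, r j) (x : ι → R) :
    (∑ j, r j * x j) ^ 2 ≤ |r i| * ∑ j ∈ univ.erase i, r j * (x j - x i) ^ 2 := by
  rw [sum_mul_eq_sum_erase_mul_sub hdiag, abs_eq_sum_erase_of_nonneg hoff hdiag]
  exact sq_sum_mul_le_sum_mul_sum_mul_sq _ (fun j hj ↦ hoff j (ne_of_mem_erase hj)) _

end LaplacianRow

theorem inter_event_time_lower_bound_general {m : ℕ}
    (L : Matrix (Fin m) (Fin m) ℝ) (i : Fin m)
    (hoff : ∀ j, j ≠ i → 0 ≤ L i j)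
    (hdiag : L i i = -∑ j ∈ Finset.univ.erase i, L i j)
    (xhat : Fin m → ℝ) (hu : ∑ j, L i j * xhat j ≠ 0)
    (γ : ℝ) (hγ : γ ∈ Set.Ioo (0:ℝ) 1)
    (tk tstar : ℝ) (htk : tk ≤ tstar)
    (heq : (tstar - tk) ^ 2 * (∑ j, L i j * xhat j) ^ 2 =
      γ / (4 * |L i i|) * ∑ j ∈ Finset.univ.erase i, L i j * (xhat j - xhat i) ^ 2) :
    Real.sqrt γ / (2 * |L i i|) ≤ tstar - tk := by
  set u := ∑ j, L i j * xhat j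
  set a := |L i i|
  have hcs : u ^ 2 ≤ a * ∑ j ∈ univ.erase i, L i j * (xhat j - xhat i) ^ 2 :=
    sq_sum_mul_le_abs_mul_sum_erase_mul_sq_sub hoff hdiag xhat
  have hγ0 : 0 ≤ γ := hγ.1.le
  have hscale : γ / (4 * a ^ 2) * a = γ / (4 * a) := by
    rcases eq_or_ne a 0 with ha | ha
    · simp [ha]
    · field_simp
  have hsq : (Real.sqrt γ / (2 * a)) ^ 2 * u ^ 2 ≤ (tstar - tk) ^ 2 * u ^ 2 :=
    calc (Real.sqrt γ / (2 * a)) ^ 2 * u ^ 2 = γ / (4 * a ^ 2) * u ^ 2 := by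
          rw [div_pow, Real.sq_sqrt hγ0]; ring
      _ ≤ γ / (4 * a ^ 2) * (a * ∑ j ∈ univ.erase i, L i j * (xhat j - xhat i) ^ 2) := by
          gcongr
      _ = (tstar - tk) ^ 2 * u ^ 2 := by rw [heq, ← mul_assoc, hscale]
  rw [← sq_le_sq₀ (by positivity) (sub_nonneg.mpr htk)]
  exact le_of_mul_le_mul_right hsq (by positivity)

theorem inter_event_time_lower_bound {m : ℕ}
    (L : Matrix (Fin m) (Fin m) ℝ) (i : Fin m)
    (hoff : ∀ j, j ≠ i → 0 ≤ L i j)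
    (hdiag : L i i = -∑ j ∈ Finset.univ.erase i, L i j)
    (hdiagneg : L i i < 0)
    (xhat : Fin m → ℝ) (hu : ∑ j, L i j * xhat j ≠ 0)
    (γ : ℝ) (hγ : γ ∈ Set.Ioo (0:ℝ) 1)
    (tk tstar : ℝ) (htk : tk ≤ tstar)
    (heq : (tstar - tk) ^ 2 * (∑ j, L i j * xhat j) ^ 2 =
      γ / (4 * |L i i|) * ∑ j ∈ Finset.univ.erase i, L i j * (xhat j - xhat i) ^ 2) :
    Real.sqrt γ / (2 * |L i i|) ≤ tstar - tk :=
  inter_event_time_lower_bound_general L i hoff hdiag xhat hu γ hγ tk tstar htk heq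
end

section
/- Let L be a (possibly reducible) m×m matrix in block upper-triangular Perron–Frobenius form with diagonal blocks L^{k,k} corresponding to strongly connected components, zero row sums overall, and nonnegative off-diagonal entries. For k < K, define the auxiliary irreducible zero-row-sum matrix L̃^{k,k} by setting its off-diagonal entries equal to those of L^{k,k} and its diagonal entries so that its row sums are zero; let ξ^k > 0 be its normalized left null vector, Ξ^k = diag(ξ^k), and D^k = L^{k,k} − L̃^{k,k} (a diagonal matrix with nonpositive entries, at least one strictly negative). Then Q_k = (1/2)[Ξ^k L^{k,k} + (Ξ^k L^{k,k})ᵀ] is negative definite. -/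
/-!
With `Ξ = diagonal ξ`, `-Q = -S + diagonal (-(ξ * d))` where `S = (Ξ L̃ + L̃ᵀ Ξ) / 2`. Since `ξ` is
a left null vector of `L̃`, `S` is symmetric with zero row sums and nonnegative off-diagonal
entries, so `xᵀ (-S) x = ½ ∑ᵢⱼ Sᵢⱼ (xᵢ - xⱼ)²`. Hence `-S` is positive semidefinite and, `L̃` being
irreducible, its form vanishes only on constant vectors. The diagonal form `∑ᵢ ξᵢ (-dᵢ) xᵢ²` is
nonnegative, and positive on every nonzero constant vector because some `dᵢ < 0`.
-/

open Matrix

section SymmetricZeroRowSum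

variable {ι : Type*} {S : Matrix ι ι ℝ}

theorem mul_sub_sq_nonneg_of_offDiag_nonneg (hoff : ∀ i j, i ≠ j → 0 ≤ S i j) (x : ι → ℝ)
    (i j : ι) : 0 ≤ S i j * (x i - x j) ^ 2 := by
  rcases eq_or_ne i j with rfl | hij
  · simp
  · exact mul_nonneg (hoff i j hij) (sq_nonneg _)

variable [Fintype ι]

theorem dotProduct_neg_mulVec_eq_half_sum_sq (hS : S.IsSymm) (hrow : ∀ i, ∑ j, S i j = 0)
    (x : ι → ℝ) : x ⬝ᵥ (-S) *ᵥ x = 1 / 2 * ∑ i, ∑ j, S i j * (x i - x j) ^ 2 := by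
  have hrow_sq : ∑ i, ∑ j, S i j * x i ^ 2 = 0 :=
    Finset.sum_eq_zero fun i _ => by rw [← Finset.sum_mul, hrow, zero_mul]
  have hcol_sq : ∑ i, ∑ j, S i j * x j ^ 2 = 0 := by
    rw [Finset.sum_comm]
    refine Finset.sum_eq_zero fun j _ => ?_
    simp_rw [hS.apply j]
    rw [← Finset.sum_mul, hrow, zero_mul]
  calc x ⬝ᵥ (-S) *ᵥ x = -∑ i, ∑ j, S i j * (x i * x j) := by
        simp only [dotProduct, mulVec, Finset.mul_sum, ← Finset.sum_neg_distrib]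
        exact Finset.sum_congr rfl fun i _ => Finset.sum_congr rfl fun j _ => by
          rw [neg_apply]; ring
    _ = 1 / 2 * ∑ i, ∑ j, (S i j * x i ^ 2 - 2 * (S i j * (x i * x j)) + S i j * x j ^ 2) := by
        simp only [Finset.sum_add_distrib, Finset.sum_sub_distrib, ← Finset.mul_sum, hrow_sq,
          hcol_sq]
        ring
    _ = 1 / 2 * ∑ i, ∑ j, S i j * (x i - x j) ^ 2 := by
        congr 1
        exact Finset.sum_congr rfl fun i _ => Finset.sum_congr rfl fun j _ => by ring

theorem posSemidef_neg_of_isSymm_of_sum_eq_zero (hS : S.IsSymm)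
    (hoff : ∀ i j, i ≠ j → 0 ≤ S i j) (hrow : ∀ i, ∑ j, S i j = 0) : (-S).PosSemidef := by
  refine .of_dotProduct_mulVec_nonneg (isHermitian_iff_isSymm.2 hS.neg) fun x => ?_
  rw [star_trivial, dotProduct_neg_mulVec_eq_half_sum_sq hS hrow]
  have hterm := mul_sub_sq_nonneg_of_offDiag_nonneg hoff x
  exact mul_nonneg (by norm_num)
    (Finset.sum_nonneg fun i _ => Finset.sum_nonneg fun j _ => hterm i j)

theorem eq_of_dotProduct_neg_mulVec_eq_zero (hS : S.IsSymm)
    (hoff : ∀ i j, i ≠ j → 0 ≤ S i j) (hrow : ∀ i, ∑ j, S i j = 0) {x : ι → ℝ}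
    (hx : x ⬝ᵥ (-S) *ᵥ x = 0) {i j : ι} (hij : 0 < S i j) : x i = x j := by
  have hterm := mul_sub_sq_nonneg_of_offDiag_nonneg hoff x
  rw [dotProduct_neg_mulVec_eq_half_sum_sq hS hrow, mul_eq_zero, or_iff_right (by norm_num),
    Fintype.sum_eq_zero_iff_of_nonneg fun i => Finset.sum_nonneg fun j _ => hterm i j] at hx
  have hrow_i : ∑ j, S i j * (x i - x j) ^ 2 = 0 := congr_fun hx i
  rw [Fintype.sum_eq_zero_iff_of_nonneg (hterm i)] at hrow_i
  simpa [hij.ne', sub_eq_zero] using congr_fun hrow_i j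

theorem Matrix.PosSemidef.posDef_add_diagonal [DecidableEq ι] {M : Matrix ι ι ℝ}
    (hM : M.PosSemidef) (hker : ∀ x, x ⬝ᵥ M *ᵥ x = 0 → ∀ i j, x i = x j) {c : ι → ℝ}
    (hc : 0 ≤ c) {i₀ : ι} (hi₀ : 0 < c i₀) : (M + diagonal c).PosDef := by
  rw [posDef_iff_dotProduct_mulVec]
  refine ⟨hM.isHermitian.add (PosSemidef.diagonal hc).isHermitian, fun x hx => ?_⟩
  have hMx := hM.dotProduct_mulVec_nonneg x
  have hDx := (PosSemidef.diagonal hc).dotProduct_mulVec_nonneg x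
  simp only [star_trivial] at hMx hDx ⊢
  rw [add_mulVec, dotProduct_add]
  by_contra! hle
  have hMx0 : x ⬝ᵥ M *ᵥ x = 0 := by linarith
  have hDx0 : x ⬝ᵥ diagonal c *ᵥ x = 0 := by linarith
  have hxi₀ : x i₀ = 0 := by
    simp only [dotProduct, mulVec_diagonal, mul_left_comm (x _)] at hDx0
    have hterm : ∀ i, 0 ≤ c i * (x i * x i) := fun i => mul_nonneg (hc i) (mul_self_nonneg _)
    have := congr_fun ((Fintype.sum_eq_zero_iff_of_nonneg hterm).1 hDx0) i₀
    simpa [hi₀.ne'] using this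
  exact hx (funext fun j => (hker x hMx0 j i₀).trans hxi₀)

end SymmetricZeroRowSum

theorem IsIrreducibleMatrix.eq_of_forall_pos {m : ℕ} {L : Matrix (Fin m) (Fin m) ℝ}
    (hL : IsIrreducibleMatrix L) {α : Type*} {x : Fin m → α}
    (hx : ∀ a b, a ≠ b → 0 < L a b → x a = x b) (i j : Fin m) : x i = x j := by
  rcases eq_or_ne i j with rfl | hij
  · rfl
  have hpath := hL i j hij
  clear hij
  induction hpath with
  | single h => exact hx _ _ h.1 h.2
  | tail _ h ih => exact ih.trans (hx _ _ h.1 h.2)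

section WeightedSymmPart

variable {ι : Type*} [Fintype ι] [DecidableEq ι] (ξ : ι → ℝ) (L : Matrix ι ι ℝ)

noncomputable def weightedSymmPart : Matrix ι ι ℝ :=
  (1 / 2 : ℝ) • (diagonal ξ * L + (diagonal ξ * L)ᵀ)

theorem weightedSymmPart_apply (i j : ι) :
    weightedSymmPart ξ L i j = (ξ i * L i j + ξ j * L j i) / 2 := by
  simp only [weightedSymmPart, transpose_mul, diagonal_transpose, Matrix.smul_apply,
    Matrix.add_apply, diagonal_mul, mul_diagonal, transpose_apply, smul_eq_mul]
  ring

theorem weightedSymmPart_isSymm : (weightedSymmPart ξ L).IsSymm :=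
  IsSymm.ext fun i j => by simp only [weightedSymmPart_apply]; ring

theorem weightedSymmPart_add_diagonal (d : ι → ℝ) :
    weightedSymmPart ξ (L + diagonal d) = weightedSymmPart ξ L + diagonal (ξ * d) := by
  ext i j
  rcases eq_or_ne i j with rfl | hij
  · simp only [weightedSymmPart_apply, Matrix.add_apply, diagonal_apply_eq, Pi.mul_apply]
    ring
  · simp [weightedSymmPart_apply, hij, hij.symm]

end WeightedSymmPart

namespace IsLaplacian

variable {m : ℕ} {L : Matrix (Fin m) (Fin m) ℝ} {ξ : Fin m → ℝ}

theorem sum_weightedSymmPart_eq_zero (hL : IsLaplacian L) (hξL : ∀ j, ∑ i, ξ i * L i j = 0)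
    (i : Fin m) : ∑ j, weightedSymmPart ξ L i j = 0 := by
  simp only [weightedSymmPart_apply, ← Finset.sum_div, Finset.sum_add_distrib, ← Finset.mul_sum,
    hL.2 i, hξL i]
  simp

theorem weightedSymmPart_nonneg (hL : IsLaplacian L) (hξ : 0 ≤ ξ) {i j : Fin m} (hij : i ≠ j) :
    0 ≤ weightedSymmPart ξ L i j := by
  rw [weightedSymmPart_apply]
  have := mul_nonneg (hξ i) (hL.1 i j hij)
  have := mul_nonneg (hξ j) (hL.1 j i hij.symm)
  positivity

theorem weightedSymmPart_pos (hL : IsLaplacian L) (hξ : ∀ i, 0 < ξ i) {i j : Fin m}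
    (hij : i ≠ j) (hLij : 0 < L i j) : 0 < weightedSymmPart ξ L i j := by
  rw [weightedSymmPart_apply]
  have := mul_pos (hξ i) hLij
  have := mul_nonneg (hξ j).le (hL.1 j i hij.symm)
  positivity

theorem posSemidef_neg_weightedSymmPart (hL : IsLaplacian L) (hξ : 0 ≤ ξ)
    (hξL : ∀ j, ∑ i, ξ i * L i j = 0) : (-weightedSymmPart ξ L).PosSemidef :=
  posSemidef_neg_of_isSymm_of_sum_eq_zero (weightedSymmPart_isSymm ξ L)
    (fun _ _ => hL.weightedSymmPart_nonneg hξ) (hL.sum_weightedSymmPart_eq_zero hξL)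

theorem eq_of_dotProduct_neg_weightedSymmPart_eq_zero (hL : IsLaplacian L)
    (hirr : IsIrreducibleMatrix L) (hξ : ∀ i, 0 < ξ i) (hξL : ∀ j, ∑ i, ξ i * L i j = 0)
    {x : Fin m → ℝ} (hx : x ⬝ᵥ (-weightedSymmPart ξ L) *ᵥ x = 0) (i j : Fin m) : x i = x j :=
  hirr.eq_of_forall_pos (fun _ _ hab hpos =>
    eq_of_dotProduct_neg_mulVec_eq_zero (weightedSymmPart_isSymm ξ L)
      (fun _ _ => hL.weightedSymmPart_nonneg fun k => (hξ k).le)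
      (hL.sum_weightedSymmPart_eq_zero hξL) hx (hL.weightedSymmPart_pos hξ hab hpos)) i j

end IsLaplacian

theorem block_Q_negative_definite_general {n : ℕ}
    (A Ltil : Matrix (Fin n) (Fin n) ℝ) (d : Fin n → ℝ)
    (hLtil : IsLaplacian Ltil) (hirr : IsIrreducibleMatrix Ltil)
    (hA : A = Ltil + Matrix.diagonal d)
    (hd : ∀ i, d i ≤ 0) (hdneg : ∃ i, d i < 0)
    (ξ : Fin n → ℝ) (hξpos : ∀ i, 0 < ξ i)
    (hξL : ∀ j, ∑ i, ξ i * Ltil i j = 0)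
    (Q : Matrix (Fin n) (Fin n) ℝ)
    (hQ : Q = (1/2 : ℝ) • (Matrix.diagonal ξ * A + (Matrix.diagonal ξ * A)ᵀ)) :
    (-Q).PosDef := by
  obtain ⟨i₀, hi₀⟩ := hdneg
  have hQ_split : -Q = -weightedSymmPart ξ Ltil + diagonal (-(ξ * d)) := by
    rw [hQ, ← weightedSymmPart, hA, weightedSymmPart_add_diagonal, neg_add, diagonal_neg]
    rfl
  rw [hQ_split]
  exact (hLtil.posSemidef_neg_weightedSymmPart (fun i => (hξpos i).le) hξL).posDef_add_diagonal
    (fun x hx => hLtil.eq_of_dotProduct_neg_weightedSymmPart_eq_zero hirr hξpos hξL hx)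
    (fun i => neg_nonneg.2 (mul_nonpos_of_nonneg_of_nonpos (hξpos i).le (hd i)))
    (neg_pos.2 (mul_neg_of_pos_of_neg (hξpos i₀) hi₀))

/-- A diagonal block `A = L̃ + D` of the Perron–Frobenius form of a reducible Laplacian,
where `L̃` is the irreducible zero-row-sum part and `D` is diagonal, nonpositive, with at
least one strictly negative entry, gives a negative definite symmetrized matrix
`Q = (Ξ A + Aᵀ Ξ)/2`. -/
theorem block_Q_negative_definite {n : ℕ} (hn : 0 < n)
    (A Ltil : Matrix (Fin n) (Fin n) ℝ) (d : Fin n → ℝ)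
    (hLtil : IsLaplacian Ltil) (hirr : IsIrreducibleMatrix Ltil)
    (hA : A = Ltil + Matrix.diagonal d)
    (hd : ∀ i, d i ≤ 0) (hdneg : ∃ i, d i < 0)
    (ξ : Fin n → ℝ) (hξpos : ∀ i, 0 < ξ i)
    (hξL : ∀ j, ∑ i, ξ i * Ltil i j = 0) (hξsum : ∑ i, ξ i = 1)
    (Q : Matrix (Fin n) (Fin n) ℝ)
    (hQ : Q = (1/2 : ℝ) • (Matrix.diagonal ξ * A + (Matrix.diagonal ξ * A)ᵀ)) :
    (-Q).PosDef :=
  block_Q_negative_definite_general A Ltil d hLtil hirr hA hd hdneg ξ hξpos hξL Q hQ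
end
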